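/- arXiv:1707.03379 — 2 statements merged into one kernel-verified Lean document; each statement's English description precedes it below -/
import Mathlib

section
/- For every positive integer n, the denominator of the Bernoulli number B_{2n} (written as a rational number in lowest terms) is divisible by 6. -/
/-!
By von Staudt–Clausen, `B_{2k} + ∑ 1/q` is an integer, the sum running over the primes `q` with
`q - 1 ∣ 2k`. If such a prime `p` did not divide the denominator of `B_{2k}`, then `1/p` would be
this integer minus `B_{2k}` minus the other reciprocals `1/q`, all of which are `p`-integral:
absurd. For `k ≥ 1` both `p = 2` and `p = 3` qualify.
-/

open Finset

theorem prime_dvd_den_bernoulli_of_sub_one_dvd {p k : ℕ} [hp : Fact p.Prime] (hk : 0 < k)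
    (hpk : p - 1 ∣ 2 * k) : p ∣ (bernoulli (2 * k)).den := by
  set v := Rat.padicValuation p
  set P := {q ∈ range (2 * k + 2) | q.Prime ∧ q - 1 ∣ 2 * k}
  have hpP : p ∈ P := by
    have := Nat.le_of_dvd (by omega) hpk
    simp only [P, mem_filter, mem_range]
    exact ⟨by omega, hp.out, hpk⟩
  obtain ⟨z, hz⟩ := Bernoulli.vonStaudt_clausen k
  rw [← add_sum_erase P _ hpP] at hz
  by_contra hB
  have hothers : v (∑ q ∈ P.erase p, (1 : ℚ) / q) ≤ 1 := by
    refine v.map_sum_le fun q hq => Rat.padicValuation_le_one_iff.2 ?_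
    obtain ⟨hqp, hq⟩ := mem_erase.1 hq
    have hq_prime := (mem_filter.1 hq).2.1
    rw [one_div, Rat.inv_natCast_den_of_pos hq_prime.pos]
    exact fun h => hqp ((Nat.prime_dvd_prime_iff_eq hp.out hq_prime).1 h).symm
  have hinv : v ((1 : ℚ) / p) ≤ 1 := by
    have : (1 : ℚ) / p = z - bernoulli (2 * k) - ∑ q ∈ P.erase p, (1 : ℚ) / q := by
      rw [hz]; ring
    rw [this]
    refine v.map_sub_le (v.map_sub_le ?_ (Rat.padicValuation_le_one_iff.2 hB)) hothers
    exact Rat.padicValuation_le_one_iff.2 (by simpa using hp.out.ne_one)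
  rw [Rat.padicValuation_le_one_iff, one_div, Rat.inv_natCast_den_of_pos hp.out.pos] at hinv
  exact hinv dvd_rfl

theorem six_dvd_bernoulli_denominator (n : ℕ) (hn : 0 < n) :
    6 ∣ (bernoulli (2 * n)).den :=
  Nat.Coprime.mul_dvd_of_dvd_of_dvd (m := 2) (n := 3) (by norm_num)
    (prime_dvd_den_bernoulli_of_sub_one_dvd hn (by simp))
    (prime_dvd_den_bernoulli_of_sub_one_dvd hn (by simp))
end

section
/- The generalized continued fraction π = 4/(1 + 1²/(2 + 3²/(2 + 5²/(2 + ···)))) holds: the sequence of convergents of the continued fraction with partial numerators a₁ = 1², a₂ = 3², a₃ = 5², …, a_k = (2k−1)², leading term 0, first partial denominator 1 and all subsequent partial denominators equal to 2, applied as x_k = 4/c_k where c_k is the k-th convergent, converges to π; equivalently, the convergents of the continued fraction 1 + K_{k≥1}((2k−1)²/2) converge to 4/π. -/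
/-!
Euler's transformation of the Leibniz series: the numerators of the continued fraction are the
double factorials `A_k = 1 · 3 ⋯ (2k + 1)`, and the denominators are
`B_k = A_k · ∑_{i ≤ k} (-1)^i / (2i + 1)`, because both sides satisfy the same three-term
recurrence with the same initial values. Hence `A_k / B_k` is the reciprocal of a partial sum of
the Leibniz series, which tends to `π / 4`.
-/

open Real Filter

/-- Numerators `A_k` (shifted: `cfPiNum (k+1) = A_k`, `cfPiNum 0 = A_{-1} = 1`)
for the continued fraction `1 + K_{k≥1}((2k-1)²/2)`, i.e. with leading term
`b₀ = 1`, partial denominators `b_k = 2` and partial numerators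
`a_k = (2k-1)²` for `k ≥ 1`. -/
noncomputable def cfPiNum : ℕ → ℝ
  | 0 => 1
  | 1 => 1
  | (k + 2) => 2 * cfPiNum (k + 1) + (2 * (k + 1) - 1 : ℝ) ^ 2 * cfPiNum k

/-- Denominators `B_k` (shifted: `cfPiDen (k+1) = B_k`, `cfPiDen 0 = B_{-1} = 0`). -/
noncomputable def cfPiDen : ℕ → ℝ
  | 0 => 0
  | 1 => 1
  | (k + 2) => 2 * cfPiDen (k + 1) + (2 * (k + 1) - 1 : ℝ) ^ 2 * cfPiDen k

open Finset

noncomputable def leibnizSum (k : ℕ) : ℝ := ∑ i ∈ range k, (-1 : ℝ) ^ i / (2 * i + 1)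

lemma leibnizSum_succ (k : ℕ) :
    leibnizSum (k + 1) = leibnizSum k + (-1 : ℝ) ^ k / (2 * k + 1) :=
  sum_range_succ _ _

lemma cfPiNum_add_two (k : ℕ) :
    cfPiNum (k + 2) = 2 * cfPiNum (k + 1) + (2 * k + 1) ^ 2 * cfPiNum k := by
  rw [cfPiNum]; ring

lemma cfPiDen_add_two (k : ℕ) :
    cfPiDen (k + 2) = 2 * cfPiDen (k + 1) + (2 * k + 1) ^ 2 * cfPiDen k := by
  rw [cfPiDen]; ring

lemma cfPiNum_succ (k : ℕ) : cfPiNum (k + 1) = (2 * k + 1) * cfPiNum k := by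
  induction k with
  | zero => simp [cfPiNum]
  | succ k ih =>
    rw [cfPiNum_add_two, ih]; push_cast; ring

lemma cfPiNum_pos (k : ℕ) : 0 < cfPiNum k := by
  induction k with
  | zero => simp [cfPiNum]
  | succ k ih => rw [cfPiNum_succ]; positivity

lemma cfPiDen_eq_cfPiNum_mul_leibnizSum (k : ℕ) : cfPiDen k = cfPiNum k * leibnizSum k := by
  induction k using Nat.twoStepInduction with
  | zero => simp [cfPiDen, leibnizSum]
  | one => simp [cfPiDen, cfPiNum, leibnizSum]
  | more n ih₀ ih₁ =>
    rw [cfPiDen_add_two, ih₀, ih₁, cfPiNum_succ (n + 1), cfPiNum_succ n,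
      leibnizSum_succ (n + 1), leibnizSum_succ n]
    push_cast
    field_simp
    ring

lemma cfPiNum_div_cfPiDen (k : ℕ) : cfPiNum k / cfPiDen k = (leibnizSum k)⁻¹ := by
  rw [cfPiDen_eq_cfPiNum_mul_leibnizSum, div_mul_eq_div_div, div_self (cfPiNum_pos k).ne', one_div]

lemma tendsto_leibnizSum : Tendsto leibnizSum atTop (nhds (π / 4)) :=
  tendsto_sum_pi_div_four

/-- The convergents `c_k = A_k / B_k` of `1 + 1²/(2 + 3²/(2 + 5²/(2 + ⋯)))`
converge to `4/π`; equivalently `x_k = 4 / c_k` converges to `π`, so that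
`π = 4/(1 + 1²/(2 + 3²/(2 + 5²/(2 + ⋯))))`. -/
theorem pi_continued_fraction_lord_brouncker :
    Tendsto (fun k : ℕ => cfPiNum (k + 1) / cfPiDen (k + 1)) atTop (nhds (4 / π)) ∧
    Tendsto (fun k : ℕ => 4 / (cfPiNum (k + 1) / cfPiDen (k + 1))) atTop (nhds π) := by
  have hsum : Tendsto (fun k : ℕ => leibnizSum (k + 1)) atTop (nhds (π / 4)) :=
    tendsto_leibnizSum.comp (tendsto_add_atTop_nat 1)
  simp only [cfPiNum_div_cfPiDen, div_inv_eq_mul]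
  constructor
  · simpa only [inv_div] using hsum.inv₀ (by positivity)
  · simpa only [mul_div_cancel₀ π four_ne_zero] using hsum.const_mul 4
end
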